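/- arXiv:2103.13531 — 4 statements merged into one kernel-verified Lean document; each statement's English description precedes it below -/
import Mathlib

section
/- If α : I → ℝ³ is a unit-speed rectifying curve with positive curvature, written α(s) = (s + b/a)·t(s) + (1/a)·b(s), then α(s) × α'(s) = (1/a)·n(s) for all s; in particular s ↦ α(s) × α'(s) has constant nonzero magnitude 1/|a|. -/
/-! Since `t × t = 0`, only the binormal term survives in `α × t`, and
`b × t = (t × n) × t = ⟪t, t⟫ n - ⟪n, t⟫ t = n` because `t` is a unit vector orthogonal to `n`.
Orthogonality comes from differentiating `‖t‖² = 1` and dividing by `κ > 0`. -/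

open Real Set
open scoped RealInnerProductSpace

noncomputable section

/-- Euclidean 3-space. -/
abbrev E3 := EuclideanSpace ℝ (Fin 3)

/-- Constructor for points of `E3`. -/
def e3 (x y z : ℝ) : E3 := (WithLp.equiv 2 (Fin 3 → ℝ)).symm ![x, y, z]

/-- The cross product on `E3`. -/
def cross3 (a b : E3) : E3 :=
  e3 (a 1 * b 2 - a 2 * b 1) (a 2 * b 0 - a 0 * b 2) (a 0 * b 1 - a 1 * b 0)

open Matrix Filter Topology

theorem HasDerivAt.inner_eq_zero_of_eventually_norm_eq {F : Type*} [NormedAddCommGroup F]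
    [InnerProductSpace ℝ F] {f : ℝ → F} {f' : F} {x c : ℝ} (hf : HasDerivAt f f' x)
    (hc : ∀ᶠ t in 𝓝 x, ‖f t‖ = c) : ⟪f x, f'⟫ = 0 := by
  have hconst : HasDerivAt (‖f ·‖ ^ 2) 0 x :=
    (hasDerivAt_const x (c ^ 2)).congr_of_eventuallyEq (by filter_upwards [hc] with t ht; rw [ht])
  simpa using hf.norm_sq.unique hconst

theorem cross3_eq_toLp_cross (u v : E3) : cross3 u v = WithLp.toLp 2 (u.ofLp ⨯₃ v.ofLp) := rfl

theorem cross3_self (u : E3) : cross3 u u = 0 := by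
  simp [cross3_eq_toLp_cross]

theorem cross3_add_left (u v w : E3) : cross3 (u + v) w = cross3 u w + cross3 v w := by
  simp [cross3_eq_toLp_cross]

theorem cross3_smul_left (c : ℝ) (u w : E3) : cross3 (c • u) w = c • cross3 u w := by
  simp [cross3_eq_toLp_cross]

theorem cross3_cross3 (u v w : E3) : cross3 (cross3 u v) w = ⟪u, w⟫ • v - ⟪v, w⟫ • u := by
  simp [cross3_eq_toLp_cross, cross_cross_eq_smul_sub_smul, EuclideanSpace.inner_eq_star_dotProduct,
    dotProduct_comm]

theorem cross3_cross3_self_of_norm_eq_one_of_inner_eq_zero {u v : E3} (hu : ‖u‖ = 1)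
    (huv : ⟪u, v⟫ = 0) : cross3 (cross3 u v) u = v := by
  rw [cross3_cross3, real_inner_self_eq_norm_sq, hu, real_inner_comm, huv]
  simp

theorem rectifying_cross_eq_general (I : Set ℝ) (hIo : IsOpen I)
    (α T N B : ℝ → E3) (κ : ℝ → ℝ)
    (hT : ∀ s ∈ I, HasDerivAt T (κ s • N s) s)
    (hTu : ∀ s ∈ I, ‖T s‖ = 1)
    (hNu : ∀ s ∈ I, ‖N s‖ = 1)
    (hBdef : ∀ s ∈ I, B s = cross3 (T s) (N s))
    (hκ : ∀ s ∈ I, 0 < κ s)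
    (a b : ℝ)
    (hform : ∀ s ∈ I, α s = (s + b / a) • T s + (1 / a) • B s) :
    ∀ s ∈ I, cross3 (α s) (T s) = (1 / a) • N s ∧
      ‖cross3 (α s) (T s)‖ = 1 / |a| := by
  intro s hs
  have hTN : ⟪T s, N s⟫ = 0 := by
    have h := (hT s hs).inner_eq_zero_of_eventually_norm_eq
      (eventually_of_mem (hIo.mem_nhds hs) hTu)
    rwa [real_inner_smul_right, mul_eq_zero, or_iff_right (hκ s hs).ne'] at h
  have hcross : cross3 (α s) (T s) = (1 / a) • N s := by
    rw [hform s hs, hBdef s hs, cross3_add_left, cross3_smul_left, cross3_smul_left, cross3_self,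
      cross3_cross3_self_of_norm_eq_one_of_inner_eq_zero (hTu s hs) hTN, smul_zero, zero_add]
  refine ⟨hcross, ?_⟩
  rw [hcross, norm_smul, hNu s hs, mul_one, norm_div, norm_one, Real.norm_eq_abs]

/-- For a rectifying curve `α(s) = (s + b/a) • t(s) + (1/a) • b(s)` one has
`α × α' = (1/a) • n`, of constant nonzero magnitude `1/|a|`. -/
theorem rectifying_cross_eq (I : Set ℝ) (hIo : IsOpen I) (hIc : Convex ℝ I)
    (α T N B : ℝ → E3) (κ τ : ℝ → ℝ)
    (hα : ∀ s ∈ I, HasDerivAt α (T s) s)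
    (hT : ∀ s ∈ I, HasDerivAt T (κ s • N s) s)
    (hN : ∀ s ∈ I, HasDerivAt N ((-κ s) • T s + τ s • B s) s)
    (hB : ∀ s ∈ I, HasDerivAt B ((-τ s) • N s) s)
    (hTu : ∀ s ∈ I, ‖T s‖ = 1)
    (hNu : ∀ s ∈ I, ‖N s‖ = 1)
    (hBdef : ∀ s ∈ I, B s = cross3 (T s) (N s))
    (hκ : ∀ s ∈ I, 0 < κ s)
    (a b : ℝ) (ha : a ≠ 0)
    (hform : ∀ s ∈ I, α s = (s + b / a) • T s + (1 / a) • B s) :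
    ∀ s ∈ I, cross3 (α s) (T s) = (1 / a) • N s ∧
      ‖cross3 (α s) (T s)‖ = 1 / |a| :=
  rectifying_cross_eq_general I hIo α T N B κ hT hTu hNu hBdef hκ a b hform
end
end

section
/- Let α : I → ℝ³ be a unit-speed curve with positive curvature. Then α × α' has constant nonzero magnitude if and only if α is a rectifying curve or the image of α is contained in a sphere centered at the origin. -/
/-!
Put `p = ⟪α, t⟫` and `q = ⟪α, n⟫`. By Lagrange's identity `‖α × t‖² = ‖α‖² - p²`, and the
Frenet equations give `(‖α‖²)' = 2p` and `p' = 1 + κq`, hence `(‖α × t‖²)' = -2κpq`. So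
`‖α × t‖` is constant exactly when `pq = 0` everywhere. This pointwise alternative globalizes by
connectedness: `{q ≠ 0}` is open, and so is `{q = 0}`, because at a common zero of `p` and `q`
we have `p' = 1`, so nearby `p ≠ 0` and hence `q = 0`. If `p ≡ 0` then `‖α‖` is constant.
Conversely the constant is nonzero: otherwise `α` would be parallel to `t` (rectifying case) or
zero (spherical case), and both force `α ≡ 0`, contradicting `‖α'‖ = 1`.
-/

open Real Set
open scoped RealInnerProductSpace

noncomputable section

open Filter Topology

lemma norm_cross3_sq (u v : E3) : ‖cross3 u v‖ ^ 2 = ‖u‖ ^ 2 * ‖v‖ ^ 2 - ⟪u, v⟫ ^ 2 := by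
  simp only [← real_inner_self_eq_norm_sq, cross3, e3, PiLp.inner_apply, RCLike.inner_apply,
    Fin.sum_univ_three, WithLp.equiv_symm_apply, Fin.isValue, Matrix.cons_val_zero, ringHom_apply,
    Matrix.cons_val_one, Matrix.cons_val]
  ring

lemma exists_ne_zero_forall_eq_of_forall_eq {X M : Type*} [Zero M] [Nontrivial M] {I : Set X}
    {f : X → M} (hconst : ∀ x ∈ I, ∀ y ∈ I, f x = f y) (hne : ∀ x ∈ I, f x ≠ 0) :
    ∃ δ : M, δ ≠ 0 ∧ ∀ x ∈ I, f x = δ := by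
  rcases I.eq_empty_or_nonempty with rfl | ⟨x₀, hx₀⟩
  · obtain ⟨δ, hδ⟩ := exists_ne (0 : M)
    exact ⟨δ, hδ, by simp⟩
  · exact ⟨f x₀, hne x₀ hx₀, fun x hx => hconst x hx x₀ hx₀⟩

lemma IsPreconnected.eqOn_zero_or_eqOn_zero_of_mul_eq_zero {X : Type*} [TopologicalSpace X]
    {I : Set X} (hI : IsPreconnected I) (hIo : IsOpen I) {f g : X → ℝ}
    (hf : ContinuousOn f I) (hg : ContinuousOn g I) (hfg : ∀ x ∈ I, f x * g x = 0)
    (hisolated : ∀ x ∈ I, f x = 0 → g x = 0 → ∀ᶠ y in 𝓝[≠] x, f y ≠ 0) :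
    (∀ x ∈ I, f x = 0) ∨ ∀ x ∈ I, g x = 0 := by
  have hcover : I ⊆ interior {x | g x = 0} ∪ I ∩ g ⁻¹' {0}ᶜ := by
    intro x hx
    by_cases hgx : g x = 0
    · left
      rw [mem_interior_iff_mem_nhds]
      have hf_ne : ∀ᶠ y in 𝓝 x, y ≠ x → f y ≠ 0 := by
        by_cases hfx : f x = 0
        · exact eventually_nhdsWithin_iff.1 (hisolated x hx hfx hgx)
        · filter_upwards [(hf.continuousAt (hIo.mem_nhds hx)).eventually_ne hfx] with y hy _
          exact hy
      filter_upwards [hf_ne, hIo.mem_nhds hx] with y hy hyI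
      rcases eq_or_ne y x with rfl | hyx
      · exact hgx
      · exact (mul_eq_zero.1 (hfg y hyI)).resolve_left (hy hyx)
    · exact Or.inr ⟨hx, hgx⟩
  have hdisj : Disjoint (interior {x | g x = 0}) (I ∩ g ⁻¹' {0}ᶜ) :=
    Set.disjoint_left.2 fun x hx hx' => hx'.2 (interior_subset (s := {x | g x = 0}) hx)
  rcases hI.subset_or_subset isOpen_interior (hg.isOpen_inter_preimage hIo isOpen_compl_singleton)
    hdisj hcover with hzero | hne
  · exact Or.inr fun x hx => interior_subset (s := {x | g x = 0}) (hzero hx)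
  · exact Or.inl fun x hx => (mul_eq_zero.1 (hfg x hx)).resolve_right (hne hx).2

lemma norm_sub_inner_smul_sq {F : Type*} [NormedAddCommGroup F] [InnerProductSpace ℝ F]
    (x : F) {t : F} (ht : ‖t‖ = 1) : ‖x - ⟪x, t⟫ • t‖ ^ 2 = ‖x‖ ^ 2 - ⟪x, t⟫ ^ 2 := by
  rw [norm_sub_sq_real, norm_smul, ht, real_inner_smul_right, Real.norm_eq_abs, mul_one, sq_abs]
  ring

section Derivatives

variable {F : Type*} [NormedAddCommGroup F] [NormedSpace ℝ F] {I : Set ℝ} {s : ℝ}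

lemma HasDerivAt.eq_zero_of_forall_eq (hIo : IsOpen I) (hs : s ∈ I) {f : ℝ → F} {f' : F}
    (hf : HasDerivAt f f' s) {c : F} (hc : ∀ u ∈ I, f u = c) : f' = 0 :=
  hf.unique ((hasDerivAt_const s c).congr_of_eventuallyEq (eventually_of_mem (hIo.mem_nhds hs) hc))

lemma exists_forall_eq_of_hasDerivAt_zero (hIo : IsOpen I) (hI : IsPreconnected I) {f : ℝ → F}
    (hf : ∀ s ∈ I, HasDerivAt f 0 s) : ∃ c, ∀ s ∈ I, f s = c :=
  hIo.exists_is_const_of_deriv_eq_zero hI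
    (fun s hs => (hf s hs).differentiableAt.differentiableWithinAt) fun s hs => (hf s hs).deriv

end Derivatives

section Curve

variable {F : Type*} [NormedAddCommGroup F] [InnerProductSpace ℝ F] {I : Set ℝ}
  {α T N : ℝ → F} {κ : ℝ → ℝ} {s : ℝ}

lemma hasDerivAt_inner_tangent (hα : HasDerivAt α (T s) s) (hT : HasDerivAt T (κ s • N s) s)
    (hTu : ‖T s‖ = 1) :
    HasDerivAt (fun u => ⟪α u, T u⟫) (1 + κ s * ⟪α s, N s⟫) s := by
  refine (hα.inner ℝ hT).congr_deriv ?_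
  rw [real_inner_smul_right, real_inner_self_eq_norm_sq, hTu]
  ring

lemma hasDerivAt_norm_sq_sub_inner_sq (hα : HasDerivAt α (T s) s)
    (hT : HasDerivAt T (κ s • N s) s) (hTu : ‖T s‖ = 1) :
    HasDerivAt (fun u => ‖α u‖ ^ 2 - ⟪α u, T u⟫ ^ 2)
      (-(2 * κ s * (⟪α s, T s⟫ * ⟪α s, N s⟫))) s := by
  refine (hα.norm_sq.sub ((hasDerivAt_inner_tangent hα hT hTu).pow 2)).congr_deriv ?_
  push_cast
  ring

lemma inner_tangent_mul_inner_normal_eq_zero (hIo : IsOpen I)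
    (hα : ∀ s ∈ I, HasDerivAt α (T s) s) (hT : ∀ s ∈ I, HasDerivAt T (κ s • N s) s)
    (hTu : ∀ s ∈ I, ‖T s‖ = 1) (hκ : ∀ s ∈ I, 0 < κ s) {c : ℝ}
    (hc : ∀ s ∈ I, ‖α s‖ ^ 2 - ⟪α s, T s⟫ ^ 2 = c) :
    ∀ s ∈ I, ⟪α s, T s⟫ * ⟪α s, N s⟫ = 0 := by
  intro s hs
  have h := (hasDerivAt_norm_sq_sub_inner_sq (hα s hs) (hT s hs)
    (hTu s hs)).eq_zero_of_forall_eq hIo hs hc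
  simpa [(hκ s hs).ne'] using h

lemma inner_tangent_eqOn_zero_or_inner_normal_eqOn_zero (hIo : IsOpen I) (hI : IsPreconnected I)
    (hα : ∀ s ∈ I, HasDerivAt α (T s) s) (hT : ∀ s ∈ I, HasDerivAt T (κ s • N s) s)
    (hN : ∀ s ∈ I, ContinuousAt N s) (hTu : ∀ s ∈ I, ‖T s‖ = 1)
    (han : ∀ s ∈ I, ⟪α s, T s⟫ * ⟪α s, N s⟫ = 0) :
    (∀ s ∈ I, ⟪α s, T s⟫ = 0) ∨ ∀ s ∈ I, ⟪α s, N s⟫ = 0 := by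
  have ha' s (hs : s ∈ I) := hasDerivAt_inner_tangent (hα s hs) (hT s hs) (hTu s hs)
  refine hI.eqOn_zero_or_eqOn_zero_of_mul_eq_zero hIo
    (fun s hs => (ha' s hs).continuousAt.continuousWithinAt)
    (fun s hs => ((hα s hs).continuousAt.inner (hN s hs)).continuousWithinAt) han ?_
  intro s hs ha hn
  have h := (ha' s hs).eventually_ne (c := ⟪α s, T s⟫) (by simp [hn])
  simpa only [ha] using h

lemma exists_norm_eq_of_inner_tangent_eq_zero (hIo : IsOpen I) (hI : IsPreconnected I)
    (hα : ∀ s ∈ I, HasDerivAt α (T s) s) (ha : ∀ s ∈ I, ⟪α s, T s⟫ = 0) :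
    ∃ r, ∀ s ∈ I, ‖α s‖ = r := by
  obtain ⟨c, hc⟩ := exists_forall_eq_of_hasDerivAt_zero hIo hI (f := fun u => ‖α u‖ ^ 2)
    fun s hs => by simpa [ha s hs] using (hα s hs).norm_sq
  exact ⟨√c, fun s hs => by rw [← hc s hs, Real.sqrt_sq (norm_nonneg _)]⟩

lemma norm_sq_sub_inner_sq_eq_of_inner_normal_eq_zero (hIo : IsOpen I) (hI : IsPreconnected I)
    (hα : ∀ s ∈ I, HasDerivAt α (T s) s) (hT : ∀ s ∈ I, HasDerivAt T (κ s • N s) s)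
    (hTu : ∀ s ∈ I, ‖T s‖ = 1) (hn : ∀ s ∈ I, ⟪α s, N s⟫ = 0) :
    ∀ s ∈ I, ∀ t ∈ I, ‖α s‖ ^ 2 - ⟪α s, T s⟫ ^ 2 = ‖α t‖ ^ 2 - ⟪α t, T t⟫ ^ 2 := by
  obtain ⟨c, hc⟩ := exists_forall_eq_of_hasDerivAt_zero hIo hI fun s hs => by
    simpa [hn s hs] using hasDerivAt_norm_sq_sub_inner_sq (hα s hs) (hT s hs) (hTu s hs)
  intro s hs t ht
  rw [hc s hs, hc t ht]

lemma eq_zero_of_eq_inner_smul_tangent (hIo : IsOpen I) (hα : ∀ s ∈ I, HasDerivAt α (T s) s)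
    (hT : ∀ s ∈ I, HasDerivAt T (κ s • N s) s) (hTu : ∀ s ∈ I, ‖T s‖ = 1)
    (hN : ∀ s ∈ I, N s ≠ 0) (hκ : ∀ s ∈ I, 0 < κ s) (hn : ∀ s ∈ I, ⟪α s, N s⟫ = 0)
    (hpar : ∀ s ∈ I, α s = ⟪α s, T s⟫ • T s) :
    ∀ s ∈ I, α s = 0 := by
  intro s hs
  have hderiv : HasDerivAt α (⟪α s, T s⟫ • κ s • N s + (1 + κ s * ⟪α s, N s⟫) • T s) s :=
    ((hasDerivAt_inner_tangent (hα s hs) (hT s hs) (hTu s hs)).smul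
      (hT s hs)).congr_of_eventuallyEq (eventually_of_mem (hIo.mem_nhds hs) hpar)
  have h := (hα s hs).unique hderiv
  rw [hn s hs, mul_zero, add_zero, one_smul, right_eq_add, smul_smul, smul_eq_zero,
    mul_eq_zero] at h
  rcases h with (ha | hκ0) | hN0
  · rw [hpar s hs, ha, zero_smul]
  · exact absurd hκ0 (hκ s hs).ne'
  · exact absurd hN0 (hN s hs)

lemma norm_sq_sub_inner_sq_pos_of_inner_normal_eq_zero (hIo : IsOpen I) (hI : IsPreconnected I)
    (hα : ∀ s ∈ I, HasDerivAt α (T s) s) (hT : ∀ s ∈ I, HasDerivAt T (κ s • N s) s)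
    (hTu : ∀ s ∈ I, ‖T s‖ = 1) (hN : ∀ s ∈ I, N s ≠ 0) (hκ : ∀ s ∈ I, 0 < κ s)
    (hn : ∀ s ∈ I, ⟪α s, N s⟫ = 0) :
    ∀ s ∈ I, 0 < ‖α s‖ ^ 2 - ⟪α s, T s⟫ ^ 2 := by
  intro s hs
  by_contra hle
  have hzero : ∀ u ∈ I, ‖α u - ⟪α u, T u⟫ • T u‖ ^ 2 = 0 := by
    intro u hu
    rw [norm_sub_inner_smul_sq _ (hTu u hu),
      norm_sq_sub_inner_sq_eq_of_inner_normal_eq_zero hIo hI hα hT hTu hn u hu s hs]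
    have := norm_sub_inner_smul_sq (α s) (hTu s hs)
    linarith [sq_nonneg ‖α s - ⟪α s, T s⟫ • T s‖]
  have hα0 := eq_zero_of_eq_inner_smul_tangent hIo hα hT hTu hN hκ hn
    fun u hu => sub_eq_zero.1 (by simpa using hzero u hu)
  simpa [(hα s hs).eq_zero_of_forall_eq hIo hs hα0] using hTu s hs

lemma inner_tangent_eq_zero_of_norm_eq (hIo : IsOpen I) (hα : ∀ s ∈ I, HasDerivAt α (T s) s)
    {r : ℝ} (hr : ∀ s ∈ I, ‖α s‖ = r) : ∀ s ∈ I, ⟪α s, T s⟫ = 0 := by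
  intro s hs
  have h := (hα s hs).norm_sq.eq_zero_of_forall_eq hIo hs (c := r ^ 2) fun u hu => by
    rw [hr u hu]
  simpa using h

lemma norm_sq_sub_inner_sq_eq_sq_of_norm_eq (hIo : IsOpen I)
    (hα : ∀ s ∈ I, HasDerivAt α (T s) s) {r : ℝ} (hr : ∀ s ∈ I, ‖α s‖ = r) :
    ∀ s ∈ I, ‖α s‖ ^ 2 - ⟪α s, T s⟫ ^ 2 = r ^ 2 := by
  intro s hs
  rw [inner_tangent_eq_zero_of_norm_eq hIo hα hr s hs, hr s hs, sq (0 : ℝ), mul_zero, sub_zero]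

lemma norm_sq_sub_inner_sq_pos_of_norm_eq (hIo : IsOpen I) (hα : ∀ s ∈ I, HasDerivAt α (T s) s)
    (hTu : ∀ s ∈ I, ‖T s‖ = 1) {r : ℝ} (hr : ∀ s ∈ I, ‖α s‖ = r) :
    ∀ s ∈ I, 0 < ‖α s‖ ^ 2 - ⟪α s, T s⟫ ^ 2 := by
  intro s hs
  rw [norm_sq_sub_inner_sq_eq_sq_of_norm_eq hIo hα hr s hs]
  have hr0 : r ≠ 0 := by
    rintro rfl
    have hα0 : ∀ u ∈ I, α u = 0 := fun u hu => norm_eq_zero.1 (hr u hu)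
    simpa [(hα s hs).eq_zero_of_forall_eq hIo hs hα0] using hTu s hs
  positivity

end Curve

theorem cross_const_iff_rectifying_or_spherical_general (I : Set ℝ) (hIo : IsOpen I) (hIc : Convex ℝ I)
    (α T N B : ℝ → E3) (κ τ : ℝ → ℝ)
    (hα : ∀ s ∈ I, HasDerivAt α (T s) s)
    (hT : ∀ s ∈ I, HasDerivAt T (κ s • N s) s)
    (hN : ∀ s ∈ I, HasDerivAt N ((-κ s) • T s + τ s • B s) s)
    (hTu : ∀ s ∈ I, ‖T s‖ = 1)
    (hNu : ∀ s ∈ I, ‖N s‖ = 1)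
    (hκ : ∀ s ∈ I, 0 < κ s) :
    (∃ δ : ℝ, δ ≠ 0 ∧ ∀ s ∈ I, ‖cross3 (α s) (T s)‖ = δ) ↔
      ((∀ s ∈ I, ⟪α s, N s⟫ = 0) ∨ ∃ r : ℝ, ∀ s ∈ I, ‖α s‖ = r) := by
  have hI := hIc.isPreconnected
  set h : ℝ → ℝ := fun s => ‖α s‖ ^ 2 - ⟪α s, T s⟫ ^ 2
  have hcross : ∀ s ∈ I, ‖cross3 (α s) (T s)‖ ^ 2 = h s := fun s hs => by
    rw [norm_cross3_sq, hTu s hs, one_pow, mul_one]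
  constructor
  · rintro ⟨δ, -, hδ⟩
    have hpq := inner_tangent_mul_inner_normal_eq_zero hIo hα hT hTu hκ (c := δ ^ 2)
      fun s hs => by rw [← hδ s hs, hcross s hs]
    rcases inner_tangent_eqOn_zero_or_inner_normal_eqOn_zero hIo hI hα hT
      (fun s hs => (hN s hs).continuousAt) hTu hpq with hp | hq
    · exact Or.inr (exists_norm_eq_of_inner_tangent_eq_zero hIo hI hα hp)
    · exact Or.inl hq
  · intro hcase
    obtain ⟨hconst, hpos⟩ : (∀ s ∈ I, ∀ t ∈ I, h s = h t) ∧ ∀ s ∈ I, 0 < h s := by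
      rcases hcase with hq | ⟨r, hr⟩
      · have hN0 : ∀ s ∈ I, N s ≠ 0 := fun s hs => norm_ne_zero_iff.1 (by simp [hNu s hs])
        exact ⟨norm_sq_sub_inner_sq_eq_of_inner_normal_eq_zero hIo hI hα hT hTu hq,
          norm_sq_sub_inner_sq_pos_of_inner_normal_eq_zero hIo hI hα hT hTu hN0 hκ hq⟩
      · have hr2 := norm_sq_sub_inner_sq_eq_sq_of_norm_eq hIo hα hr
        exact ⟨fun s hs t ht => (hr2 s hs).trans (hr2 t ht).symm,
          norm_sq_sub_inner_sq_pos_of_norm_eq hIo hα hTu hr⟩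
    refine exists_ne_zero_forall_eq_of_forall_eq (fun s hs t ht => ?_) fun s hs => ?_
    · exact (pow_left_inj₀ (norm_nonneg _) (norm_nonneg _) two_ne_zero).1
        (by rw [hcross s hs, hcross t ht, hconst s hs t ht])
    · exact (pow_ne_zero_iff two_ne_zero).1 (by rw [hcross s hs]; exact (hpos s hs).ne')

/-- A unit-speed curve with positive curvature has `α × α'` of constant nonzero
magnitude iff it is rectifying or spherical about the origin. -/
theorem cross_const_iff_rectifying_or_spherical (I : Set ℝ) (hIo : IsOpen I) (hIc : Convex ℝ I)
    (α T N B : ℝ → E3) (κ τ : ℝ → ℝ)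
    (hα : ∀ s ∈ I, HasDerivAt α (T s) s)
    (hT : ∀ s ∈ I, HasDerivAt T (κ s • N s) s)
    (hN : ∀ s ∈ I, HasDerivAt N ((-κ s) • T s + τ s • B s) s)
    (hB : ∀ s ∈ I, HasDerivAt B ((-τ s) • N s) s)
    (hTu : ∀ s ∈ I, ‖T s‖ = 1)
    (hNu : ∀ s ∈ I, ‖N s‖ = 1)
    (hBdef : ∀ s ∈ I, B s = cross3 (T s) (N s))
    (hκ : ∀ s ∈ I, 0 < κ s) :
    (∃ δ : ℝ, δ ≠ 0 ∧ ∀ s ∈ I, ‖cross3 (α s) (T s)‖ = δ) ↔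
      ((∀ s ∈ I, ⟪α s, N s⟫ = 0) ∨ ∃ r : ℝ, ∀ s ∈ I, ‖α s‖ = r) :=
  cross_const_iff_rectifying_or_spherical_general I hIo hIc α T N B κ τ hα hT hN hTu hNu hκ
end
end

section
/- A unit-speed rectifying curve α with positive curvature can be written as α(s) = (1/a)·√(1 + (as + b)²) · y(c + arctan(as + b)), where a > 0, b, c are constants and y is a unit-speed curve on the unit sphere centered at the origin; in particular every rectifying curve lies on a cone with vertex at the origin. -/
open Real Set
open scoped RealInnerProductSpace

noncomputable section

/-! Differentiating `⟪α, N⟫ = 0` along the Frenet frame gives `⟪α, T⟫' = 1` and `⟪α, B⟫' = 0`, so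
`α = (s + C) T + m B`. Here `m ≠ 0`, since `κ ⟪α, T⟫ = τ ⟪α, B⟫` would otherwise force
`⟪α, T⟫ ≡ 0`. With `a = 1 / |m|` and `b = C / |m|` this reads `⟪α, T⟫ = (a s + b) / a` and
`‖α‖ = √(1 + (a s + b)²) / a`. In the angle `θ = arctan (a s + b)`, where
`cos θ = 1 / √(1 + (a s + b)²)`, the point `a cos θ • α s` is on the unit sphere, and its
derivative `T / cos θ - a sin θ • α` has norm one by the same two formulas. -/

lemma inner_e3 (x y : E3) : ⟪x, y⟫ = x 0 * y 0 + x 1 * y 1 + x 2 * y 2 := by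
  simp [PiLp.inner_apply, Fin.sum_univ_three, RCLike.inner_apply, mul_comm]

lemma inner_cross3_left (t n : E3) : ⟪t, cross3 t n⟫ = 0 := by
  simp only [inner_e3, cross3, e3, WithLp.equiv_symm_apply, Matrix.cons_val_zero,
    Matrix.cons_val_one, Matrix.cons_val]
  ring

lemma inner_cross3_right (t n : E3) : ⟪n, cross3 t n⟫ = 0 := by
  simp only [inner_e3, cross3, e3, WithLp.equiv_symm_apply, Matrix.cons_val_zero,
    Matrix.cons_val_one, Matrix.cons_val]
  ring

lemma inner_cross3_self (t n : E3) :
    ⟪cross3 t n, cross3 t n⟫ = ⟪t, t⟫ * ⟪n, n⟫ - ⟪t, n⟫ ^ 2 := by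
  simp only [inner_e3, cross3, e3, WithLp.equiv_symm_apply, Matrix.cons_val_zero,
    Matrix.cons_val_one, Matrix.cons_val]
  ring

lemma orthonormal_cross3 {t n : E3} (ht : ‖t‖ = 1) (hn : ‖n‖ = 1) (htn : ⟪t, n⟫ = 0) :
    Orthonormal ℝ ![t, n, cross3 t n] := by
  have hc : ‖cross3 t n‖ = 1 := by
    rw [norm_eq_sqrt_real_inner, inner_cross3_self, real_inner_self_eq_norm_sq,
      real_inner_self_eq_norm_sq, ht, hn, htn]
    norm_num
  have hct : ⟪cross3 t n, t⟫ = 0 := by rw [real_inner_comm, inner_cross3_left]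
  have hcn : ⟪cross3 t n, n⟫ = 0 := by rw [real_inner_comm, inner_cross3_right]
  rw [orthonormal_iff_ite]
  intro i j
  fin_cases i <;> fin_cases j <;>
    simp [ht, hn, hc, htn, hct, hcn, real_inner_comm t n, inner_cross3_left, inner_cross3_right]

lemma norm_sq_eq_sum_inner_cross3_sq {t n : E3} (ht : ‖t‖ = 1) (hn : ‖n‖ = 1)
    (htn : ⟪t, n⟫ = 0) (v : E3) :
    ‖v‖ ^ 2 = ⟪v, t⟫ ^ 2 + ⟪v, n⟫ ^ 2 + ⟪v, cross3 t n⟫ ^ 2 := by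
  have hon := orthonormal_cross3 ht hn htn
  let b := OrthonormalBasis.mk hon
    (hon.linearIndependent.span_eq_top_of_card_eq_finrank (by simp)).ge
  have parseval := b.sum_inner_mul_inner v v
  simp only [b, OrthonormalBasis.coe_mk, Fin.sum_univ_three] at parseval
  rw [← real_inner_self_eq_norm_sq, ← parseval]
  simp [real_inner_comm v, sq]

lemma HasDerivAt.eq_zero_of_forall_eq_const {I : Set ℝ} {f : ℝ → ℝ} {f' c s : ℝ}
    (hI : IsOpen I) (hs : s ∈ I) (hf : ∀ u ∈ I, f u = c) (h : HasDerivAt f f' s) : f' = 0 :=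
  h.unique ((hasDerivAt_const s c).congr_of_eventuallyEq
    (Filter.eventually_of_mem (hI.mem_nhds hs) hf))

section Frenet

variable {F : Type*} [NormedAddCommGroup F] [InnerProductSpace ℝ F]
  {I : Set ℝ} {α T N B : ℝ → F} {κ τ : ℝ → ℝ} {s : ℝ}

lemma inner_tangent_normal_eq_zero (hI : IsOpen I) (hs : s ∈ I) (hTu : ∀ u ∈ I, ‖T u‖ = 1)
    (hT : HasDerivAt T (κ s • N s) s) (hκ : κ s ≠ 0) : ⟪T s, N s⟫ = 0 := by
  have hTT : ∀ u ∈ I, ⟪T u, T u⟫ = 1 := fun u hu => by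
    rw [real_inner_self_eq_norm_sq, hTu u hu, one_pow]
  have h := (hT.inner ℝ hT).eq_zero_of_forall_eq_const hI hs hTT
  rw [real_inner_smul_left, real_inner_smul_right, real_inner_comm (T s) (N s)] at h
  have : κ s * ⟪T s, N s⟫ = 0 := by linarith
  exact (mul_eq_zero.mp this).resolve_left hκ

lemma hasDerivAt_inner_tangent_of_inner_normal_eq_zero (hα : HasDerivAt α (T s) s)
    (hT : HasDerivAt T (κ s • N s) s) (hTu : ‖T s‖ = 1) (hαN : ⟪α s, N s⟫ = 0) :
    HasDerivAt (fun u => ⟪α u, T u⟫) 1 s := by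
  refine (hα.inner ℝ hT).congr_deriv ?_
  rw [real_inner_smul_right, hαN, real_inner_self_eq_norm_sq, hTu]
  ring

lemma hasDerivAt_inner_binormal_of_inner_normal_eq_zero (hα : HasDerivAt α (T s) s)
    (hB : HasDerivAt B ((-τ s) • N s) s) (hTB : ⟪T s, B s⟫ = 0) (hαN : ⟪α s, N s⟫ = 0) :
    HasDerivAt (fun u => ⟪α u, B u⟫) 0 s := by
  refine (hα.inner ℝ hB).congr_deriv ?_
  rw [real_inner_smul_right, hαN, hTB]
  ring

lemma curvature_mul_inner_tangent_of_rectifying (hI : IsOpen I) (hs : s ∈ I)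
    (hα : HasDerivAt α (T s) s) (hN : HasDerivAt N ((-κ s) • T s + τ s • B s) s)
    (hTN : ⟪T s, N s⟫ = 0) (hrect : ∀ u ∈ I, ⟪α u, N u⟫ = 0) :
    κ s * ⟪α s, T s⟫ = τ s * ⟪α s, B s⟫ := by
  have h := (hα.inner ℝ hN).eq_zero_of_forall_eq_const hI hs hrect
  rw [inner_add_right, real_inner_smul_right, real_inner_smul_right, hTN] at h
  linarith

lemma exists_inner_tangent_eq_add_of_rectifying (hIo : IsOpen I) (hIc : Convex ℝ I)
    (hα : ∀ s ∈ I, HasDerivAt α (T s) s) (hT : ∀ s ∈ I, HasDerivAt T (κ s • N s) s)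
    (hTu : ∀ s ∈ I, ‖T s‖ = 1) (hrect : ∀ s ∈ I, ⟪α s, N s⟫ = 0) :
    ∃ C, ∀ s ∈ I, ⟪α s, T s⟫ = s + C := by
  have hd : ∀ s ∈ I, HasDerivAt (fun u => ⟪α u, T u⟫) 1 s := fun s hs =>
    hasDerivAt_inner_tangent_of_inner_normal_eq_zero (hα s hs) (hT s hs) (hTu s hs) (hrect s hs)
  obtain ⟨C, hC⟩ := hIo.exists_eq_add_of_deriv_eq hIc.isPreconnected
    (fun s hs => (hd s hs).differentiableAt.differentiableWithinAt)
    differentiableOn_id (fun s hs => by simp [(hd s hs).deriv])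
  exact ⟨C, hC⟩

lemma inner_binormal_ne_zero_of_rectifying {s₀ m : ℝ} (hIo : IsOpen I) (hs₀ : s₀ ∈ I)
    (hα : ∀ s ∈ I, HasDerivAt α (T s) s) (hT : ∀ s ∈ I, HasDerivAt T (κ s • N s) s)
    (hN : ∀ s ∈ I, HasDerivAt N ((-κ s) • T s + τ s • B s) s) (hTu : ∀ s ∈ I, ‖T s‖ = 1)
    (hTN : ∀ s ∈ I, ⟪T s, N s⟫ = 0) (hκ : ∀ s ∈ I, κ s ≠ 0)
    (hrect : ∀ s ∈ I, ⟪α s, N s⟫ = 0) (hm : ∀ s ∈ I, ⟪α s, B s⟫ = m) : m ≠ 0 := by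
  rintro rfl
  have hαT : ∀ s ∈ I, ⟪α s, T s⟫ = 0 := fun s hs => by
    have h := curvature_mul_inner_tangent_of_rectifying hIo hs (hα s hs) (hN s hs) (hTN s hs)
      hrect
    rw [hm s hs, mul_zero] at h
    exact (mul_eq_zero.mp h).resolve_left (hκ s hs)
  exact one_ne_zero ((hasDerivAt_inner_tangent_of_inner_normal_eq_zero (hα s₀ hs₀) (hT s₀ hs₀)
    (hTu s₀ hs₀) (hrect s₀ hs₀)).eq_zero_of_forall_eq_const hIo hs₀ hαT)

lemma exists_inner_binormal_eq_of_rectifying (hIo : IsOpen I) (hIc : Convex ℝ I)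
    (hα : ∀ s ∈ I, HasDerivAt α (T s) s) (hB : ∀ s ∈ I, HasDerivAt B ((-τ s) • N s) s)
    (hTB : ∀ s ∈ I, ⟪T s, B s⟫ = 0) (hrect : ∀ s ∈ I, ⟪α s, N s⟫ = 0) :
    ∃ m, ∀ s ∈ I, ⟪α s, B s⟫ = m := by
  have hd : ∀ s ∈ I, HasDerivAt (fun u => ⟪α u, B u⟫) 0 s := fun s hs =>
    hasDerivAt_inner_binormal_of_inner_normal_eq_zero (hα s hs) (hB s hs) (hTB s hs) (hrect s hs)
  exact hIo.exists_is_const_of_deriv_eq_zero hIc.isPreconnected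
    (fun s hs => (hd s hs).differentiableAt.differentiableWithinAt) (fun s hs => (hd s hs).deriv)

end Frenet

lemma abs_mul_sqrt_one_add_div_abs_sq {m : ℝ} (hm : m ≠ 0) (x : ℝ) :
    |m| * √(1 + (x / |m|) ^ 2) = √(x ^ 2 + m ^ 2) := by
  have hm' : 0 < |m| := abs_pos.mpr hm
  calc |m| * √(1 + (x / |m|) ^ 2) = √(m ^ 2) * √(1 + (x / |m|) ^ 2) := by
        rw [Real.sqrt_sq_eq_abs]
    _ = √(m ^ 2 * (1 + (x / |m|) ^ 2)) := (Real.sqrt_mul (sq_nonneg m) _).symm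
    _ = √(x ^ 2 + m ^ 2) := by
        congr 1
        field_simp
        rw [sq_abs]
        ring

theorem exists_inner_tangent_and_norm_eq_of_rectifying {I : Set ℝ} (hIo : IsOpen I)
    (hIc : Convex ℝ I)
    {α T N B : ℝ → E3} {κ τ : ℝ → ℝ}
    (hα : ∀ s ∈ I, HasDerivAt α (T s) s)
    (hT : ∀ s ∈ I, HasDerivAt T (κ s • N s) s)
    (hN : ∀ s ∈ I, HasDerivAt N ((-κ s) • T s + τ s • B s) s)
    (hB : ∀ s ∈ I, HasDerivAt B ((-τ s) • N s) s)
    (hTu : ∀ s ∈ I, ‖T s‖ = 1) (hNu : ∀ s ∈ I, ‖N s‖ = 1)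
    (hBdef : ∀ s ∈ I, B s = cross3 (T s) (N s)) (hκ : ∀ s ∈ I, κ s ≠ 0)
    (hrect : ∀ s ∈ I, ⟪α s, N s⟫ = 0) :
    ∃ a b : ℝ, 0 < a ∧ ∀ s ∈ I,
      ⟪α s, T s⟫ = (a * s + b) / a ∧ ‖α s‖ = 1 / a * √(1 + (a * s + b) ^ 2) := by
  rcases I.eq_empty_or_nonempty with rfl | ⟨s₀, hs₀⟩
  · exact ⟨1, 0, one_pos, by simp⟩
  have hTN : ∀ s ∈ I, ⟪T s, N s⟫ = 0 := fun s hs =>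
    inner_tangent_normal_eq_zero hIo hs hTu (hT s hs) (hκ s hs)
  have hTB : ∀ s ∈ I, ⟪T s, B s⟫ = 0 := fun s hs => by
    rw [hBdef s hs, inner_cross3_left]
  obtain ⟨C, hC⟩ := exists_inner_tangent_eq_add_of_rectifying hIo hIc hα hT hTu hrect
  obtain ⟨m, hm⟩ := exists_inner_binormal_eq_of_rectifying hIo hIc hα hB hTB hrect
  have hm0 : m ≠ 0 :=
    inner_binormal_ne_zero_of_rectifying hIo hs₀ hα hT hN hTu hTN hκ hrect hm
  have hm' : 0 < |m| := abs_pos.mpr hm0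
  refine ⟨|m|⁻¹, C / |m|, inv_pos.mpr hm', fun s hs => ⟨?_, ?_⟩⟩
  · rw [hC s hs]
    field_simp
  · have hsq := norm_sq_eq_sum_inner_cross3_sq (hTu s hs) (hNu s hs) (hTN s hs) (α s)
    rw [← hBdef s hs, hrect s hs, hC s hs, hm s hs] at hsq
    rw [one_div, inv_inv, show |m|⁻¹ * s + C / |m| = (s + C) / |m| by ring,
      abs_mul_sqrt_one_add_div_abs_sq hm0, ← Real.sqrt_sq (norm_nonneg _), hsq]
    ring_nf

section CentralProjection

variable {F : Type*} [NormedAddCommGroup F] [InnerProductSpace ℝ F]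
  {α : ℝ → F} {a b s θ : ℝ} {v p : F}

/-- When `‖α s‖ = √(1 + (a s + b)²) / a`, this is `α / ‖α‖` in the angle `t = arctan (a s + b)`. -/
def centralProjection (a b : ℝ) (α : ℝ → F) (t : ℝ) : F :=
  (a * cos t) • α ((tan t - b) / a)

lemma tan_arctan_sub_div (ha : a ≠ 0) (s b : ℝ) : (tan (arctan (a * s + b)) - b) / a = s := by
  rw [tan_arctan]
  field_simp
  ring

lemma hasDerivAt_centralProjection (ha : a ≠ 0) (hθ : cos θ ≠ 0)
    (hα : HasDerivAt α v ((tan θ - b) / a)) :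
    HasDerivAt (centralProjection a b α)
      ((cos θ)⁻¹ • v - (a * sin θ) • α ((tan θ - b) / a)) θ := by
  have hg : HasDerivAt (fun t => (tan t - b) / a) (1 / cos θ ^ 2 / a) θ :=
    ((hasDerivAt_tan hθ).sub_const b).div_const a
  refine (((hasDerivAt_cos θ).const_mul a).smul (hα.scomp θ hg)).congr_deriv ?_
  rw [smul_smul, sub_eq_add_neg, ← neg_smul]
  congr 2
  · field_simp
  · ring

lemma norm_inv_cos_smul_sub_sin_smul (hθ : cos θ ≠ 0) (hv : ‖v‖ = 1) (hp : ‖p‖ = (cos θ)⁻¹)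
    (hpv : ⟪p, v⟫ = tan θ) : ‖(cos θ)⁻¹ • v - sin θ • p‖ = 1 := by
  have hsq : ‖(cos θ)⁻¹ • v - sin θ • p‖ ^ 2 = 1 := by
    rw [norm_sub_sq_real, norm_smul, norm_smul, hv, hp, real_inner_smul_left,
      real_inner_smul_right, real_inner_comm, hpv, tan_eq_sin_div_cos, Real.norm_eq_abs,
      Real.norm_eq_abs, mul_pow, mul_pow, sq_abs, sq_abs]
    field_simp
    linear_combination (-1) * sin_sq_add_cos_sq θ
  exact (pow_eq_one_iff_of_nonneg (norm_nonneg _) two_ne_zero).mp hsq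

theorem centralProjection_arctan (ha : 0 < a) (hα : HasDerivAt α v s) (hv : ‖v‖ = 1)
    (hαv : ⟪α s, v⟫ = (a * s + b) / a) (hnorm : ‖α s‖ = 1 / a * √(1 + (a * s + b) ^ 2)) :
    ‖centralProjection a b α (arctan (a * s + b))‖ = 1 ∧
      HasDerivAt (centralProjection a b α)
        (deriv (centralProjection a b α) (arctan (a * s + b))) (arctan (a * s + b)) ∧
      ‖deriv (centralProjection a b α) (arctan (a * s + b))‖ = 1 ∧
      α s = (1 / a * √(1 + (a * s + b) ^ 2)) • centralProjection a b α (arctan (a * s + b)) := by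
  set θ := arctan (a * s + b)
  have hcos : cos θ = 1 / √(1 + (a * s + b) ^ 2) := cos_arctan _
  have hθ : 0 < cos θ := cos_arctan_pos _
  have hs : (tan θ - b) / a = s := tan_arctan_sub_div ha.ne' s b
  have hscale : 1 / a * √(1 + (a * s + b) ^ 2) * (a * cos θ) = 1 := by
    rw [hcos]
    field_simp
  have hy : centralProjection a b α θ = (a * cos θ) • α s := by
    rw [centralProjection, hs]
  have hd := hasDerivAt_centralProjection ha.ne' hθ.ne' (hs ▸ hα)
  rw [hs] at hd
  have hv' : ‖(cos θ)⁻¹ • v - (a * sin θ) • α s‖ = 1 := by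
    rw [mul_comm, ← smul_smul]
    refine norm_inv_cos_smul_sub_sin_smul hθ.ne' hv ?_ ?_
    · rw [norm_smul, hnorm, Real.norm_eq_abs, abs_of_pos ha, hcos]
      field_simp
    · rw [real_inner_smul_left, hαv, tan_arctan]
      field_simp
  refine ⟨?_, ?_, ?_, ?_⟩
  · rw [hy, norm_smul, hnorm, Real.norm_eq_abs, abs_of_pos (by positivity)]
    linear_combination hscale
  · rwa [hd.deriv]
  · rwa [hd.deriv]
  · rw [hy, smul_smul, hscale, one_smul]

end CentralProjection

/-- A unit-speed rectifying curve with positive curvature can be written as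
`α(s) = (1/a)√(1+(as+b)²) • y(c + arctan(as+b))` with `y` a unit-speed curve on
the unit sphere; in particular `α` lies on a cone with vertex at the origin. -/
theorem rectifying_cone_parametrization (I : Set ℝ) (hIo : IsOpen I) (hIc : Convex ℝ I)
    (α T N B : ℝ → E3) (κ τ : ℝ → ℝ)
    (hα : ∀ s ∈ I, HasDerivAt α (T s) s)
    (hT : ∀ s ∈ I, HasDerivAt T (κ s • N s) s)
    (hN : ∀ s ∈ I, HasDerivAt N ((-κ s) • T s + τ s • B s) s)
    (hB : ∀ s ∈ I, HasDerivAt B ((-τ s) • N s) s)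
    (hTu : ∀ s ∈ I, ‖T s‖ = 1)
    (hNu : ∀ s ∈ I, ‖N s‖ = 1)
    (hBdef : ∀ s ∈ I, B s = cross3 (T s) (N s))
    (hκ : ∀ s ∈ I, 0 < κ s)
    (hrect : ∀ s ∈ I, ⟪α s, N s⟫ = 0) :
    ∃ a b c : ℝ, ∃ y : ℝ → E3, 0 < a ∧
      ∀ s ∈ I,
        ‖y (c + Real.arctan (a * s + b))‖ = 1 ∧
        HasDerivAt y (deriv y (c + Real.arctan (a * s + b))) (c + Real.arctan (a * s + b)) ∧
        ‖deriv y (c + Real.arctan (a * s + b))‖ = 1 ∧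
        ‖α s‖ = (1 / a) * Real.sqrt (1 + (a * s + b) ^ 2) ∧
        α s = ((1 / a) * Real.sqrt (1 + (a * s + b) ^ 2)) • y (c + Real.arctan (a * s + b)) := by
  obtain ⟨a, b, ha, hαT_norm⟩ := exists_inner_tangent_and_norm_eq_of_rectifying hIo hIc
    hα hT hN hB hTu hNu hBdef (fun s hs => (hκ s hs).ne') hrect
  refine ⟨a, b, 0, centralProjection a b α, ha, fun s hs => ?_⟩
  obtain ⟨hαT, hnorm⟩ := hαT_norm s hs
  obtain ⟨hy, hdy, hdy_norm, hαy⟩ :=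
    centralProjection_arctan ha (hα s hs) (hTu s hs) hαT hnorm
  rw [zero_add]
  exact ⟨hy, hdy, hdy_norm, hnorm, hαy⟩
end
end

section
/- The curve α(s) = (1/a)√(1+(as+b)²)·(sin ψ₀ cos(θ(s)/sin ψ₀), sin ψ₀ sin(θ(s)/sin ψ₀), cos ψ₀), with θ(s) = c + arctan(as+b), a > 0, 0 < ψ₀ < π/2, is parametrized by arc length: ‖α'(s)‖ = 1 for all s. -/
open Real Set
open scoped RealInnerProductSpace

noncomputable section

/-- The circle at angle `ψ` on the unit sphere, parametrized by arc length. -/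
def ycirc (ψ t : ℝ) : E3 :=
  e3 (Real.sin ψ * Real.cos (t / Real.sin ψ)) (Real.sin ψ * Real.sin (t / Real.sin ψ)) (Real.cos ψ)

/-- The derivative of `ycirc ψ`. -/
def ycirc' (ψ t : ℝ) : E3 :=
  e3 (-Real.sin (t / Real.sin ψ)) (Real.cos (t / Real.sin ψ)) 0

/-! Write `α = f • (y ∘ θ)` with `y = ycirc ψ`. Since `y` is a unit-speed curve on the unit sphere,
`y` and `y'` are orthonormal, so Pythagoras gives `‖α'‖² = f'² + (f θ')²`. With `u = a s + b` we
have `f' = u / √(1 + u²)` and `f θ' = 1 / √(1 + u²)`, whence `‖α'‖² = 1`. -/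

lemma hasDerivAt_e3 {x y z : ℝ → ℝ} {x' y' z' t : ℝ}
    (hx : HasDerivAt x x' t) (hy : HasDerivAt y y' t) (hz : HasDerivAt z z' t) :
    HasDerivAt (fun σ => e3 (x σ) (y σ) (z σ)) (e3 x' y' z') t := by
  have h : HasDerivAt (fun σ => (![x σ, y σ, z σ] : Fin 3 → ℝ)) ![x', y', z'] t := by
    rw [hasDerivAt_pi]
    intro i; fin_cases i <;> simpa
  exact (PiLp.continuousLinearEquiv 2 ℝ fun _ : Fin 3 => ℝ).symm.hasFDerivAt.comp_hasDerivAt t h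

lemma norm_e3 (x y z : ℝ) : ‖e3 x y z‖ = √(x ^ 2 + y ^ 2 + z ^ 2) := by
  simp [EuclideanSpace.norm_eq, Fin.sum_univ_three, e3, add_assoc]

lemma inner_e3_s18 (x y z x' y' z' : ℝ) :
    ⟪e3 x y z, e3 x' y' z'⟫ = x * x' + y * y' + z * z' := by
  simp [PiLp.inner_apply, Fin.sum_univ_three, e3, mul_comm, add_assoc]

lemma norm_ycirc (ψ t : ℝ) : ‖ycirc ψ t‖ = 1 := by
  rw [ycirc, norm_e3, sqrt_eq_one]
  linear_combination sin ψ ^ 2 * cos_sq_add_sin_sq (t / sin ψ) + sin_sq_add_cos_sq ψ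

lemma norm_ycirc' (ψ t : ℝ) : ‖ycirc' ψ t‖ = 1 := by
  rw [ycirc', norm_e3, sqrt_eq_one]
  linear_combination sin_sq_add_cos_sq (t / sin ψ)

lemma inner_ycirc_ycirc' (ψ t : ℝ) : ⟪ycirc ψ t, ycirc' ψ t⟫ = 0 := by
  rw [ycirc, ycirc', inner_e3_s18]
  ring

lemma hasDerivAt_ycirc {ψ : ℝ} (hψ : sin ψ ≠ 0) (t : ℝ) :
    HasDerivAt (ycirc ψ) (ycirc' ψ t) t := by
  have hφ : HasDerivAt (fun t => t / sin ψ) (1 / sin ψ) t := (hasDerivAt_id t).div_const _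
  refine (hasDerivAt_e3 (hφ.cos.const_mul (sin ψ)) (hφ.sin.const_mul (sin ψ))
    (hasDerivAt_const t (cos ψ))).congr_deriv ?_
  unfold ycirc'
  congr 1 <;> field_simp

lemma norm_smul_add_smul_sq_of_orthonormal {F : Type*} [NormedAddCommGroup F]
    [InnerProductSpace ℝ F] {v w : F} (hv : ‖v‖ = 1) (hw : ‖w‖ = 1) (hvw : ⟪v, w⟫ = 0)
    (p q : ℝ) : ‖p • v + q • w‖ ^ 2 = p ^ 2 + q ^ 2 := by
  have h : ⟪p • v, q • w⟫ = 0 := by simp [inner_smul_left, inner_smul_right, hvw]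
  rw [sq, norm_add_sq_eq_norm_sq_add_norm_sq_real h, norm_smul, norm_smul, hv, hw]
  simp [sq]

lemma norm_deriv_smul_comp_sq {F : Type*} [NormedAddCommGroup F] [InnerProductSpace ℝ F]
    {f θ : ℝ → ℝ} {y : ℝ → F} {f' θ' s : ℝ} {v : F}
    (hf : HasDerivAt f f' s) (hθ : HasDerivAt θ θ' s) (hy : HasDerivAt y v (θ s))
    (hy_norm : ‖y (θ s)‖ = 1) (hv_norm : ‖v‖ = 1) (hyv : ⟪y (θ s), v⟫ = 0) :
    ‖deriv (fun σ => f σ • y (θ σ)) s‖ ^ 2 = f' ^ 2 + (f s * θ') ^ 2 := by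
  have hD : HasDerivAt (fun σ => f σ • y (θ σ)) (f s • θ' • v + f' • y (θ s)) s :=
    hf.smul (hy.scomp s hθ)
  rw [hD.deriv, add_comm, smul_smul, norm_smul_add_smul_sq_of_orthonormal hy_norm hv_norm hyv]

lemma hasDerivAt_sqrt_one_add_sq (x : ℝ) :
    HasDerivAt (fun x => √(1 + x ^ 2)) (x / √(1 + x ^ 2)) x := by
  convert ((hasDerivAt_pow 2 x).const_add 1).sqrt (by positivity) using 1
  field_simp
  ring

/-- The explicit rectifying slant helix
`α(s) = (1/a)√(1+(as+b)²) • ycirc ψ₀ (c + arctan(as+b))` is parametrized by arc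
length: `‖α'(s)‖ = 1` for all `s`. -/
theorem rectifying_slant_helix_unit_speed (a b c ψ : ℝ) (ha : 0 < a)
    (hψ : ψ ∈ Set.Ioo 0 (Real.pi / 2)) :
    ∀ s : ℝ,
      ‖deriv (fun σ : ℝ => ((1 / a) * Real.sqrt (1 + (a * σ + b) ^ 2)) •
        ycirc ψ (c + Real.arctan (a * σ + b))) s‖ = 1 := by
  intro s
  have hsin : sin ψ ≠ 0 := (sin_pos_of_pos_of_lt_pi hψ.1 (by linarith [hψ.2, pi_pos])).ne'
  have hlin : HasDerivAt (fun σ => a * σ + b) a s := by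
    simpa using ((hasDerivAt_id s).const_mul a).add_const b
  have hf := ((hasDerivAt_sqrt_one_add_sq (a * s + b)).comp s hlin).const_mul (1 / a)
  have hθ := ((hasDerivAt_arctan (a * s + b)).comp s hlin).const_add c
  have hspeed := norm_deriv_smul_comp_sq hf hθ (hasDerivAt_ycirc hsin _) (norm_ycirc _ _)
    (norm_ycirc' _ _) (inner_ycirc_ycirc' _ _)
  rw [← pow_eq_one_iff_of_nonneg (norm_nonneg _) two_ne_zero]
  refine hspeed.trans ?_
  have hr : √(1 + (a * s + b) ^ 2) ^ 2 = 1 + (a * s + b) ^ 2 := sq_sqrt (by positivity)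
  have hr0 : √(1 + (a * s + b) ^ 2) ≠ 0 := by positivity
  simp only [Function.comp_apply]
  generalize √(1 + (a * s + b) ^ 2) = r at hr hr0 ⊢
  generalize a * s + b = u at hr ⊢
  rw [← hr]
  field_simp
  linear_combination -hr
end
end
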